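/- Pointwise divergence identity underlying the polyhedral Rellich identity: let U ⊆ ℝ³ \ {0} be open and let u : U → ℝ be smooth and harmonic (Δu = 0 on U). Define W(X) = X/|X| and the vector field V(X) = ‖∇u(X)‖² · W(X) − 2 (W(X)·∇u(X)) · ∇u(X) on U. Then V is continuously differentiable on U and its divergence satisfies div V(X) = 2 (W(X)·∇u(X))² / |X| for every X ∈ U. -/

import Mathlib

noncomputable section
open Topology

/-- The gradient of `u : ℝ³ → ℝ` as a vector in `ℝ³ = EuclideanSpace ℝ (Fin 3)`. -/
def grad3 (u : EuclideanSpace ℝ (Fin 3) → ℝ) (X : EuclideanSpace ℝ (Fin 3)) :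
    EuclideanSpace ℝ (Fin 3) :=
  (WithLp.equiv 2 (Fin 3 → ℝ)).symm fun i => fderiv ℝ u X (EuclideanSpace.single i 1)

/-- The divergence of a vector field `V : ℝ³ → ℝ³`. -/
def div3 (V : EuclideanSpace ℝ (Fin 3) → EuclideanSpace ℝ (Fin 3))
    (X : EuclideanSpace ℝ (Fin 3)) : ℝ :=
  ∑ i, fderiv ℝ (fun Y => V Y i) X (EuclideanSpace.single i 1)

private lemma norm_eq_sqrt_sum3 (Y : EuclideanSpace ℝ (Fin 3)) :
    ‖Y‖ = Real.sqrt (∑ j, Y j ^ 2) := by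
  rw [EuclideanSpace.norm_eq]
  congr 1
  exact Finset.sum_congr rfl fun j _ => by rw [Real.norm_eq_abs, sq_abs]

private lemma norm_sq_eq_sum3 (Y : EuclideanSpace ℝ (Fin 3)) :
    ‖Y‖ ^ 2 = ∑ j, Y j ^ 2 := by
  rw [norm_eq_sqrt_sum3, Real.sq_sqrt (by positivity)]

private lemma proj_hasFDerivAt (j : Fin 3) (X : EuclideanSpace ℝ (Fin 3)) :
    HasFDerivAt (fun Y : EuclideanSpace ℝ (Fin 3) => Y j)
      (EuclideanSpace.proj (𝕜 := ℝ) j) X := by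
  have h : (fun Y : EuclideanSpace ℝ (Fin 3) => Y j)
      = ⇑(EuclideanSpace.proj (𝕜 := ℝ) j) := by funext Y; simp
  rw [h]
  exact (EuclideanSpace.proj (𝕜 := ℝ) j).hasFDerivAt

/-- pointwise divergence identity underlying the polyhedral
Rellich identity.  For `U ⊆ ℝ³ \ {0}` open, `u` smooth and harmonic on `U`,
`W(X) = X/|X|` and `V = ‖∇u‖² W − 2 (W·∇u) ∇u`, the field `V` is `C¹` on `U`
and `div V(X) = 2 (W(X)·∇u(X))² / |X|` on `U`. -/
theorem rellich_divergence_identity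
    (U : Set (EuclideanSpace ℝ (Fin 3))) (hU : IsOpen U)
    (hU0 : ∀ X ∈ U, X ≠ 0)
    (u : EuclideanSpace ℝ (Fin 3) → ℝ)
    (hu : ContDiffOn ℝ (⊤ : ℕ∞) u U)
    (hharm : ∀ X ∈ U,
      ∑ i, fderiv ℝ (fun Y => fderiv ℝ u Y (EuclideanSpace.single i 1)) X
        (EuclideanSpace.single i 1) = 0)
    (W : EuclideanSpace ℝ (Fin 3) → EuclideanSpace ℝ (Fin 3))
    (hW : ∀ X, W X = ‖X‖⁻¹ • X)
    (V : EuclideanSpace ℝ (Fin 3) → EuclideanSpace ℝ (Fin 3))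
    (hV : ∀ X, V X = ‖grad3 u X‖ ^ 2 • W X -
      (2 * (inner ℝ (W X) (grad3 u X) : ℝ)) • grad3 u X) :
    ContDiffOn ℝ 1 V U ∧
    ∀ X ∈ U, div3 V X = 2 * (inner ℝ (W X) (grad3 u X) : ℝ) ^ 2 / ‖X‖ := by
  classical
  -- partial derivatives of u
  set du : Fin 3 → EuclideanSpace ℝ (Fin 3) → ℝ :=
    fun j Y => fderiv ℝ u Y (EuclideanSpace.single j 1) with hdu_def
  -- smoothness of the derivative
  have hfd : ContDiffOn ℝ 1 (fun Y => fderiv ℝ u Y) U :=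
    hu.fderiv_of_isOpen hU (by exact WithTop.coe_le_coe.mpr le_top)
  have hdu : ∀ j, ContDiffOn ℝ 1 (du j) U := by
    intro j
    have h := (ContinuousLinearMap.apply ℝ ℝ
      (EuclideanSpace.single j (1:ℝ))).contDiff.comp_contDiffOn hfd
    exact h
  have hduAt : ∀ j, ∀ Y ∈ U, DifferentiableAt ℝ (du j) Y := fun j Y hY =>
    (((hdu j).differentiableOn one_ne_zero) Y hY).differentiableAt (hU.mem_nhds hY)
  -- formula for the inner product
  have hinner : ∀ Y, (inner ℝ (W Y) (grad3 u Y) : ℝ) = ‖Y‖⁻¹ * ∑ j, Y j * du j Y := by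
    intro Y
    rw [hW, real_inner_smul_left]
    congr 1
    simp only [PiLp.inner_apply, grad3]
    refine Finset.sum_congr rfl fun j _ => ?_
    simp [du, mul_comm]
  -- formula for the squared norm of the gradient
  have hgnorm : ∀ Y, ‖grad3 u Y‖ ^ 2 = ∑ j, du j Y ^ 2 := by
    intro Y
    rw [norm_sq_eq_sum3]
    rfl
  -- component formula for V
  have hVeq : ∀ Y i, V Y i =
      (∑ j, du j Y ^ 2) * (‖Y‖⁻¹ * Y i)
        - (2 * (‖Y‖⁻¹ * ∑ j, Y j * du j Y)) * du i Y := by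
    intro Y i
    rw [hV]
    simp only [PiLp.sub_apply, PiLp.smul_apply, smul_eq_mul]
    rw [hgnorm, hinner, hW]
    simp only [PiLp.smul_apply, smul_eq_mul]
    rfl
  have hproj1 : ∀ j, ContDiff ℝ 1 (fun Y : EuclideanSpace ℝ (Fin 3) => Y j) := by
    intro j
    have h : (fun Y : EuclideanSpace ℝ (Fin 3) => Y j)
        = ⇑(EuclideanSpace.proj (𝕜 := ℝ) j) := by funext Y; simp
    rw [h]
    exact (EuclideanSpace.proj (𝕜 := ℝ) j).contDiff
  have hninv : ContDiffOn ℝ 1 (fun Z : EuclideanSpace ℝ (Fin 3) => ‖Z‖⁻¹) U := by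
    intro Y hY
    have h0 : Y ≠ 0 := hU0 Y hY
    exact (((contDiffAt_norm ℝ h0).inv (norm_ne_zero_iff.mpr h0))).contDiffWithinAt
  constructor
  · -- continuous differentiability of V
    rw [contDiffOn_euclidean]
    intro i
    have hfun : (fun Y => V Y i) = fun Y =>
        (∑ j, du j Y ^ 2) * (‖Y‖⁻¹ * Y i)
          - (2 * (‖Y‖⁻¹ * ∑ j, Y j * du j Y)) * du i Y := funext fun Y => hVeq Y i
    rw [hfun]
    exact ((ContDiffOn.sum fun j _ => (hdu j).pow 2).mul
        (hninv.mul ((hproj1 i).contDiffOn))).sub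
      ((contDiffOn_const.mul (hninv.mul (ContDiffOn.sum fun j _ =>
        ((hproj1 j).contDiffOn.mul (hdu j))))).mul (hdu i))
  · -- divergence identity
    intro X hX
    have hXne : X ≠ 0 := hU0 X hX
    have hrpos : (0:ℝ) < ‖X‖ := norm_pos_iff.mpr hXne
    have hq2 : (∑ j, X j ^ 2) = ‖X‖ ^ 2 := (norm_sq_eq_sum3 X).symm
    have hqpos : (0:ℝ) < ∑ j, X j ^ 2 := by rw [hq2]; positivity
    have hsq : Real.sqrt (∑ j, X j ^ 2) = ‖X‖ := (norm_eq_sqrt_sum3 X).symm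
    -- second derivative symmetry
    have hfd2 : HasFDerivAt (fun Y => fderiv ℝ u Y) (fderiv ℝ (fderiv ℝ u) X) X :=
      ((hfd.differentiableOn one_ne_zero X hX).differentiableAt (hU.mem_nhds hX)).hasFDerivAt
    have hev : ∀ᶠ Y in 𝓝 X, HasFDerivAt u (fderiv ℝ u Y) Y := by
      filter_upwards [hU.mem_nhds hX] with Y hY
      exact ((hu.differentiableOn (by simp) Y hY).differentiableAt (hU.mem_nhds hY)).hasFDerivAt
    have hsym := second_derivative_symmetric_of_eventually hev hfd2
    have hbbsym : ∀ i j : Fin 3,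
        fderiv ℝ (du j) X (EuclideanSpace.single i 1)
          = fderiv ℝ (du i) X (EuclideanSpace.single j 1) := by
      intro i j
      have hcomp : ∀ k : Fin 3, fderiv ℝ (du k) X
          = (ContinuousLinearMap.apply ℝ ℝ (EuclideanSpace.single k (1:ℝ))).comp
              (fderiv ℝ (fderiv ℝ u) X) := by
        intro k
        have h := (ContinuousLinearMap.apply ℝ ℝ
          (EuclideanSpace.single k (1:ℝ))).hasFDerivAt.comp X hfd2
        exact h.fderiv
      rw [hcomp j, hcomp i]
      simp only [ContinuousLinearMap.comp_apply, ContinuousLinearMap.apply_apply]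
      exact hsym _ _
    -- harmonicity
    have hdiag := hharm X hX
    -- building-block derivatives at X
    have hpow : ∀ (f : EuclideanSpace ℝ (Fin 3) → ℝ) (f' : EuclideanSpace ℝ (Fin 3) →L[ℝ] ℝ),
        HasFDerivAt f f' X → HasFDerivAt (fun Y => f Y ^ 2) (f X • f' + f X • f') X := by
      intro f f' hf
      have h := hf.mul hf
      simp only [pow_two]
      exact h
    have hQ := HasFDerivAt.sum
      (fun (j : Fin 3) (_ : j ∈ Finset.univ) => hpow _ _ (proj_hasFDerivAt j X))
    have hN := hQ.sqrt hqpos.ne'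
    have hNi : HasFDerivAt (fun Y : EuclideanSpace ℝ (Fin 3) => (Real.sqrt (∑ j, Y j ^ 2))⁻¹)
        ((-(Real.sqrt (∑ j, X j ^ 2) ^ 2)⁻¹) • ((1 / (2 * Real.sqrt (∑ j, X j ^ 2))) •
          ∑ j : Fin 3, (X j • EuclideanSpace.proj (𝕜 := ℝ) j
            + X j • EuclideanSpace.proj (𝕜 := ℝ) j))) X := by
      have h := (hasDerivAt_inv (x := Real.sqrt (∑ j, X j ^ 2))
        (by rw [hsq]; exact hrpos.ne')).comp_hasFDerivAt X hN
      exact h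
    have hG := HasFDerivAt.sum
      (fun (j : Fin 3) (_ : j ∈ Finset.univ) => hpow _ _ (hduAt j X hX).hasFDerivAt)
    have hS := HasFDerivAt.sum
      (fun (j : Fin 3) (_ : j ∈ Finset.univ) =>
        (proj_hasFDerivAt j X).mul (hduAt j X hX).hasFDerivAt)
    have hfuneq : ∀ i, (fun Y => V Y i) = fun Y =>
        (∑ j, du j Y ^ 2) * ((Real.sqrt (∑ j, Y j ^ 2))⁻¹ * Y i)
          - (2 * ((Real.sqrt (∑ j, Y j ^ 2))⁻¹ * ∑ j, Y j * du j Y)) * du i Y := by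
      intro i
      funext Y
      rw [hVeq Y i, norm_eq_sqrt_sum3]
    have hFi := fun i : Fin 3 =>
      (hG.mul (hNi.mul (proj_hasFDerivAt i X))).sub
        (((hNi.mul hS).const_mul (2:ℝ)).mul (hduAt i X hX).hasFDerivAt)
    have key : ∀ i : Fin 3, fderiv ℝ (fun Y => V Y i) X (EuclideanSpace.single i 1)
        = (∑ j, du j X ^ 2) * (‖X‖⁻¹ - X i ^ 2 * (‖X‖ ^ 2)⁻¹ * ‖X‖⁻¹)
          + 2 * ‖X‖⁻¹ * X i *
              (∑ j, du j X * (fderiv ℝ (du j) X) (EuclideanSpace.single i 1))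
          - 2 * (‖X‖⁻¹ * ∑ j, X j * du j X) *
              (fderiv ℝ (du i) X) (EuclideanSpace.single i 1)
          - 2 * du i X * ‖X‖⁻¹ *
              ((∑ j, X j * (fderiv ℝ (du j) X) (EuclideanSpace.single i 1)) + du i X)
          + 2 * du i X * (∑ j, X j * du j X) * X i * (‖X‖ ^ 2)⁻¹ * ‖X‖⁻¹ := by
      intro i
      have hF := hFi i
      simp only [Finset.sum_fn, Pi.mul_def, Pi.sub_def] at hF
      rw [hfuneq i, hF.fderiv]
      simp only [ContinuousLinearMap.add_apply, ContinuousLinearMap.sub_apply,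
        ContinuousLinearMap.smul_apply, ContinuousLinearMap.coe_sum', Finset.sum_apply,
        smul_eq_mul, PiLp.proj_apply, EuclideanSpace.single_apply, hsq,
        mul_ite, mul_one, mul_zero, ite_mul, zero_mul, Finset.sum_add_distrib,
        Finset.sum_ite_eq', Finset.mem_univ, if_true]
      ring
    have hdiag2 : (fderiv ℝ (du 0) X) (EuclideanSpace.single 0 1)
        + (fderiv ℝ (du 1) X) (EuclideanSpace.single 1 1)
        + (fderiv ℝ (du 2) X) (EuclideanSpace.single 2 1) = 0 := by
      have h := hharm X hX
      rw [Fin.sum_univ_three] at h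
      simpa only [hdu_def] using h
    have hne : ‖X‖ ≠ 0 := hrpos.ne'
    have hr2 : ‖X‖ ^ 2 = X 0 ^ 2 + X 1 ^ 2 + X 2 ^ 2 := by
      rw [← hq2, Fin.sum_univ_three]
    rw [hinner X]
    simp only [div3, key, Fin.sum_univ_three]
    rw [hbbsym 1 0, hbbsym 2 0, hbbsym 2 1]
    have hb22 : (fderiv ℝ (du 2) X) (EuclideanSpace.single 2 1)
        = -(fderiv ℝ (du 0) X) (EuclideanSpace.single 0 1)
          - (fderiv ℝ (du 1) X) (EuclideanSpace.single 1 1) := by linarith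
    rw [hb22]
    have hrt : ‖X‖ * ‖X‖⁻¹ = 1 := mul_inv_cancel₀ hne
    linear_combination ((du 0 X ^ 2 + du 1 X ^ 2 + du 2 X ^ 2) * ‖X‖⁻¹ *
        (-(1 + ‖X‖ * ‖X‖⁻¹))) * hrt
      + ((du 0 X ^ 2 + du 1 X ^ 2 + du 2 X ^ 2) * ‖X‖⁻¹ ^ 3) * hr2
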